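/- Let M be a finite set, c : M → ℝ with c(m) > 0 for all m, r : M → ℝ with r(m) ≥ 0 for all m, w : M → ℝ, ε > 0, and let 𝒮 be a set of functions M → ℝ. Suppose S* ∈ 𝒮 maximizes S ↦ Σ_{m} c(m)·S(m)·w(m) over 𝒮, and suppose there exists S₁ ∈ 𝒮 such that c(m)·S₁(m) = r(m) + ε whenever w(m) ≥ 0 and c(m)·S₁(m) = 0 whenever w(m) < 0. Assume further that r(m) ≥ ε for every m with w(m) < 0. Then Σ_{m} (r(m) − c(m)·S*(m))·w(m) ≤ −ε·Σ_{m} |w(m)|. -/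
import Mathlib


/-- Feasibility-versus-maximization inequality: if `S*` maximizes
`∑ c m • S m • w m` over the admissible set `𝒮`, and the comparison control
`S₁ ∈ 𝒮` satisfies `c m · S₁ m = r m + ε` when `w m ≥ 0` and `c m · S₁ m = 0`
when `w m < 0`, with `r m ≥ ε` whenever `w m < 0`, then
`∑ (r m − c m · S* m) · w m ≤ −ε · ∑ |w m|`. -/
theorem stmt5 {M : Type*} [Fintype M]
    (c r w : M → ℝ) (hc : ∀ m, 0 < c m) (hr : ∀ m, 0 ≤ r m)
    (ε : ℝ) (hε : 0 < ε) (𝒮 : Set (M → ℝ))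
    (Sstar : M → ℝ) (hSstar : Sstar ∈ 𝒮)
    (hmax : ∀ S ∈ 𝒮, ∑ m, c m * S m * w m ≤ ∑ m, c m * Sstar m * w m)
    (S₁ : M → ℝ) (hS₁ : S₁ ∈ 𝒮)
    (h1 : ∀ m, 0 ≤ w m → c m * S₁ m = r m + ε)
    (h2 : ∀ m, w m < 0 → c m * S₁ m = 0)
    (h3 : ∀ m, w m < 0 → ε ≤ r m) :
    ∑ m, (r m - c m * Sstar m) * w m ≤ -ε * ∑ m, |w m| := by
  have key : ∑ m, (r m - c m * S₁ m) * w m ≤ -ε * ∑ m, |w m| := by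
    rw [neg_mul, Finset.mul_sum, ← Finset.sum_neg_distrib]
    apply Finset.sum_le_sum
    intro m _
    rcases le_or_gt 0 (w m) with h | h
    · rw [h1 m h, abs_of_nonneg h]; ring_nf; nlinarith
    · rw [h2 m h, abs_of_neg h]
      have := h3 m h
      nlinarith
  have hle := hmax S₁ hS₁
  have : ∑ m, (r m - c m * Sstar m) * w m ≤ ∑ m, (r m - c m * S₁ m) * w m := by
    simp only [sub_mul]
    rw [Finset.sum_sub_distrib, Finset.sum_sub_distrib]
    linarith
  linarith
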